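/- Let x ∈ X, α > 0, and let p ∈ H be the global minimum point of g_{α,x}. Then for every h ∈ H one has the two-sided estimate 0 ≤ f_α(x + j h) − f_α(x) + (1/α)⟨p, h⟩_H ≤ (1/α)‖h‖²_H. -/

import Mathlib

/-!
Write `φ k = f (x + j k)`, a convex function on `H`. Comparing `g_{α,x}` at its minimiser `p` with its
values along the segment from `p` to any `m` and letting the step go to `0` shows that `-p/α` is a
subgradient of `φ` at `p`. Since `f_α(x + j h) = inf_k φ(h + k) + ‖k‖²/(2α)`, that subgradient
inequality together with `‖k - p‖² ≥ 0` gives the lower bound, and the choice `k = p - h` gives the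
upper bound `‖h‖²/(2α)`.
-/

open RealInnerProductSpace Set Filter Topology

theorem le_of_forall_le_add_mul {a b c : ℝ} (h : ∀ t ∈ Ioo (0 : ℝ) 1, a ≤ b + t * c) : a ≤ b := by
  have hlim : Tendsto (fun t : ℝ => b + t * c) (𝓝[>] 0) (𝓝 b) :=
    ((by fun_prop : Continuous fun t : ℝ => b + t * c).tendsto' 0 b (by simp)).mono_left
      nhdsWithin_le_nhds
  exact ge_of_tendsto hlim (by filter_upwards [Ioo_mem_nhdsGT one_pos] using h)

section MoreauEnvelope

variable {H : Type*} [NormedAddCommGroup H]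

noncomputable def moreauEnvelope (φ : H → ℝ) (α : ℝ) (h : H) : ℝ :=
  ⨅ k, φ (h + k) + ‖k‖ ^ 2 / (2 * α)

variable {φ : H → ℝ} {α : ℝ} {p : H}

theorem moreauEnvelope_zero_eq (hp : ∀ k, φ p + ‖p‖ ^ 2 / (2 * α) ≤ φ k + ‖k‖ ^ 2 / (2 * α)) :
    moreauEnvelope φ α 0 = φ p + ‖p‖ ^ 2 / (2 * α) := by
  simpa [moreauEnvelope] using ciInf_eq_of_forall_ge_of_forall_gt_exists_lt hp fun _ hw => ⟨p, hw⟩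

variable [InnerProductSpace ℝ H]

theorem ConvexOn.sub_inner_div_le_of_forall_le_add_sq_norm (hφ : ConvexOn ℝ univ φ) (hα : 0 < α)
    (hp : ∀ k, φ p + ‖p‖ ^ 2 / (2 * α) ≤ φ k + ‖k‖ ^ 2 / (2 * α)) (m : H) :
    φ p - ⟪p, m - p⟫ / α ≤ φ m := by
  refine le_of_forall_le_add_mul (c := ‖m - p‖ ^ 2 / (2 * α)) fun t ⟨ht0, ht1⟩ => ?_
  have hconv : φ (p + t • (m - p)) ≤ (1 - t) * φ p + t * φ m := by
    have hcomb : (1 - t) • p + t • m = p + t • (m - p) := by module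
    simpa only [smul_eq_mul, hcomb] using
      hφ.2 (mem_univ p) (mem_univ m) (sub_nonneg.2 ht1.le) ht0.le (by ring)
  have hnorm : ‖p + t • (m - p)‖ ^ 2 = ‖p‖ ^ 2 + 2 * t * ⟪p, m - p⟫ + t ^ 2 * ‖m - p‖ ^ 2 := by
    rw [norm_add_sq_real, real_inner_smul_right, norm_smul, mul_pow, Real.norm_eq_abs, sq_abs]
    ring
  have hmin := hp (p + t • (m - p))
  rw [hnorm] at hmin
  refine le_of_mul_le_mul_left ?_ ht0
  field_simp at hmin ⊢
  nlinarith

theorem ConvexOn.sub_inner_div_le_add_sq_norm (hφ : ConvexOn ℝ univ φ) (hα : 0 < α)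
    (hp : ∀ k, φ p + ‖p‖ ^ 2 / (2 * α) ≤ φ k + ‖k‖ ^ 2 / (2 * α)) (h k : H) :
    φ p + ‖p‖ ^ 2 / (2 * α) - ⟪p, h⟫ / α ≤ φ (h + k) + ‖k‖ ^ 2 / (2 * α) := by
  have hsub := hφ.sub_inner_div_le_of_forall_le_add_sq_norm hα hp (h + k)
  have hsq : 0 ≤ ‖k - p‖ ^ 2 := sq_nonneg _
  rw [norm_sub_sq_real, real_inner_comm] at hsq
  rw [inner_sub_right, inner_add_right, real_inner_self_eq_norm_sq] at hsub
  field_simp at hsub ⊢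
  linarith

theorem ConvexOn.sub_inner_div_le_moreauEnvelope (hφ : ConvexOn ℝ univ φ) (hα : 0 < α)
    (hp : ∀ k, φ p + ‖p‖ ^ 2 / (2 * α) ≤ φ k + ‖k‖ ^ 2 / (2 * α)) (h : H) :
    φ p + ‖p‖ ^ 2 / (2 * α) - ⟪p, h⟫ / α ≤ moreauEnvelope φ α h :=
  le_ciInf (hφ.sub_inner_div_le_add_sq_norm hα hp h)

theorem ConvexOn.moreauEnvelope_le (hφ : ConvexOn ℝ univ φ) (hα : 0 < α)
    (hp : ∀ k, φ p + ‖p‖ ^ 2 / (2 * α) ≤ φ k + ‖k‖ ^ 2 / (2 * α)) (h : H) :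
    moreauEnvelope φ α h ≤ φ p + ‖p‖ ^ 2 / (2 * α) - ⟪p, h⟫ / α + ‖h‖ ^ 2 / (2 * α) := by
  have hbdd : BddBelow (range fun k => φ (h + k) + ‖k‖ ^ 2 / (2 * α)) :=
    ⟨_, forall_mem_range.2 (hφ.sub_inner_div_le_add_sq_norm hα hp h)⟩
  calc moreauEnvelope φ α h ≤ φ (h + (p - h)) + ‖p - h‖ ^ 2 / (2 * α) := ciInf_le hbdd (p - h)
    _ = _ := by
      rw [add_sub_cancel, norm_sub_sq_real]
      field_simp
      ring

end MoreauEnvelope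

theorem moreauYosida_increment_estimate_general {X H : Type*} [NormedAddCommGroup X]
    [NormedSpace ℝ X] [NormedAddCommGroup H]
    [InnerProductSpace ℝ H]
    (j : H →L[ℝ] X)
    (f : X → ℝ) (hconv : ConvexOn ℝ Set.univ f)
    (x : X) (α : ℝ) (hα : 0 < α) (p : H)
    (hp : ∀ h : H, f (x + j p) + ‖p‖ ^ 2 / (2 * α) ≤ f (x + j h) + ‖h‖ ^ 2 / (2 * α)) :
    ∀ h : H,
      0 ≤ (⨅ k : H, (f (x + j h + j k) + ‖k‖ ^ 2 / (2 * α))) -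
          (⨅ k : H, (f (x + j k) + ‖k‖ ^ 2 / (2 * α))) + (1 / α) * ⟪p, h⟫ ∧
      (⨅ k : H, (f (x + j h + j k) + ‖k‖ ^ 2 / (2 * α))) -
          (⨅ k : H, (f (x + j k) + ‖k‖ ^ 2 / (2 * α))) + (1 / α) * ⟪p, h⟫ ≤
        (1 / α) * ‖h‖ ^ 2 := by
  intro h
  set φ : H → ℝ := fun k => f (x + j k)
  have hφ : ConvexOn ℝ univ φ := (hconv.translate_right x).comp_linearMap j.toLinearMap
  have hshift (y : H) :
      (⨅ k : H, (f (x + j y + j k) + ‖k‖ ^ 2 / (2 * α))) = moreauEnvelope φ α y := by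
    simp only [moreauEnvelope, φ, map_add, add_assoc]
  have hzero : (⨅ k : H, (f (x + j k) + ‖k‖ ^ 2 / (2 * α))) = moreauEnvelope φ α 0 := by
    simpa using hshift 0
  rw [hshift, hzero, moreauEnvelope_zero_eq hp, one_div_mul_eq_div, one_div_mul_eq_div]
  have hlower := hφ.sub_inner_div_le_moreauEnvelope hα hp h
  have hupper := hφ.moreauEnvelope_le hα hp h
  have hhalf : ‖h‖ ^ 2 / (2 * α) ≤ ‖h‖ ^ 2 / α :=
    div_le_div_of_nonneg_left (sq_nonneg _) hα (by linarith)
  constructor <;> linarith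

/-- Two-sided estimate for the increments of the Moreau–Yosida approximation: if `p`
is the global minimum point of `g_{α,x}`, then for every `h`
`0 ≤ f_α(x + j h) - f_α(x) + (1/α)⟨p, h⟩ ≤ (1/α)‖h‖²`. -/
theorem moreauYosida_increment_estimate {X H : Type*} [NormedAddCommGroup X]
    [NormedSpace ℝ X] [CompleteSpace X] [NormedAddCommGroup H]
    [InnerProductSpace ℝ H] [CompleteSpace H]
    (j : H →L[ℝ] X) (hj : Function.Injective j)
    (f : X → ℝ) (hconv : ConvexOn ℝ Set.univ f) (hlsc : LowerSemicontinuous f)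
    (x : X) (α : ℝ) (hα : 0 < α) (p : H)
    (hp : ∀ h : H, f (x + j p) + ‖p‖ ^ 2 / (2 * α) ≤ f (x + j h) + ‖h‖ ^ 2 / (2 * α)) :
    ∀ h : H,
      0 ≤ (⨅ k : H, (f (x + j h + j k) + ‖k‖ ^ 2 / (2 * α))) -
          (⨅ k : H, (f (x + j k) + ‖k‖ ^ 2 / (2 * α))) + (1 / α) * ⟪p, h⟫ ∧
      (⨅ k : H, (f (x + j h + j k) + ‖k‖ ^ 2 / (2 * α))) -
          (⨅ k : H, (f (x + j k) + ‖k‖ ^ 2 / (2 * α))) + (1 / α) * ⟪p, h⟫ ≤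
        (1 / α) * ‖h‖ ^ 2 :=
  moreauYosida_increment_estimate_general j f hconv x α hα p hp
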